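/- arXiv:2310.14353 — 2 statements merged into one kernel-verified Lean document; each statement's English description precedes it below -/
import Mathlib

section
/- If every maximal nilpotent-of-class-at-most-k subgroup of a group G is malnormal, then for any two nilpotent subgroups K₁, K₂ of G of class at most k with K₁ ∩ K₂ ≠ 1, the subgroup ⟨K₁, K₂⟩ is nilpotent of class at most k. -/
variable {G : Type*} [Group G]

/-- A subgroup is `nil_k`: nilpotent of class at most `k` (i.e. γ_{k+1} = 1). -/
def SubNilK (k : ℕ) (H : Subgroup G) : Prop := lowerCentralSeries H k = ⊥

/-- A subgroup `H ≤ G` is malnormal: `H ∩ g⁻¹Hg = 1` for all `g ∉ H`. -/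
def Malnormal (H : Subgroup G) : Prop :=
  ∀ g ∉ H, ∀ y ∈ H, g * y * g⁻¹ ∈ H → y = 1

/-- `H` is a maximal nil_k subgroup of `G`. -/
def MaxNilK (k : ℕ) (H : Subgroup G) : Prop :=
  SubNilK k H ∧ ∀ K : Subgroup G, SubNilK k K → H ≤ K → K = H

/-- `G` is NT_k: any two nil_k subgroups with nontrivial intersection generate
a nil_k subgroup. -/
def IsNTk (k : ℕ) (G : Type*) [Group G] : Prop :=
  ∀ K₁ K₂ : Subgroup G, SubNilK k K₁ → SubNilK k K₂ → K₁ ⊓ K₂ ≠ ⊥ →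
    SubNilK k (K₁ ⊔ K₂)

/-- `G` is CSN_k: every maximal nil_k subgroup is malnormal. -/
def IsCSNk (k : ℕ) (G : Type*) [Group G] : Prop :=
  ∀ H : Subgroup G, MaxNilK k H → Malnormal H

/-- `C^k_G(x) = { y : ⟨x, y⟩ is nilpotent of class at most k }`. -/
def CkSet (k : ℕ) (x : G) : Set G :=
  { y | SubNilK k (Subgroup.closure {x, y}) }

/-!
Enlarge `K₁` by Zorn's lemma to a maximal nil_k subgroup `H`; being nil_k passes to unions of
chains because the lower central series commutes with directed unions. Now `K₂` meets `H`
nontrivially. If `K₂ ⊄ H`, then `H ∩ K₂` is a proper subgroup of the nilpotent group `K₂`, so by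
the normalizer condition some `m ∈ K₂ \ H` normalizes it, and `m` conjugates a nontrivial element
of `H ∩ K₂` back into `H`, contradicting malnormality. Hence `⟨K₁, K₂⟩ ≤ H` is nil_k.
-/

lemma SubNilK.mono {k : ℕ} {A B : Subgroup G} (hAB : A ≤ B) (hB : SubNilK k B) :
    SubNilK k A :=
  le_bot_iff.mp (hB ▸ Subgroup.lowerCentralSeries_mono k hAB)

lemma Subgroup.lowerCentralSeries_sSup_le_of_directedOn {c : Set (Subgroup G)}
    (hne : c.Nonempty) (hc : DirectedOn (· ≤ ·) c) (n : ℕ) :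
    (sSup c).lowerCentralSeries n ≤ sSup ((·.lowerCentralSeries n) '' c) := by
  induction n with
  | zero => simp
  | succ n ih =>
    have hdir : DirectedOn (· ≤ ·) ((·.lowerCentralSeries n) '' c) :=
      directedOn_image.mpr (hc.mono fun _ _ h => lowerCentralSeries_mono n h)
    rw [lowerCentralSeries_succ, commutator_le]
    intro a ha b hb
    obtain ⟨_, ⟨H₁, hH₁, rfl⟩, ha₁⟩ := (mem_sSup_of_directedOn (hne.image _) hdir).mp (ih ha)
    obtain ⟨H₂, hH₂, hb₂⟩ := (mem_sSup_of_directedOn hne hc).mp hb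
    obtain ⟨H₃, hH₃, h₁₃, h₂₃⟩ := hc H₁ hH₁ H₂ hH₂
    apply le_sSup (Set.mem_image_of_mem (·.lowerCentralSeries (n + 1)) hH₃)
    exact commutator_mem_commutator (lowerCentralSeries_mono n h₁₃ ha₁) (h₂₃ hb₂)

lemma subNilK_sSup_of_directedOn {k : ℕ} {c : Set (Subgroup G)} (hne : c.Nonempty)
    (hc : DirectedOn (· ≤ ·) c) (hnil : ∀ H ∈ c, SubNilK k H) : SubNilK k (sSup c) := by
  refine le_bot_iff.mp
    ((Subgroup.lowerCentralSeries_sSup_le_of_directedOn hne hc k).trans (sSup_le ?_))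
  rintro _ ⟨H, hH, rfl⟩
  exact (hnil H hH).le

lemma exists_maxNilK_ge {k : ℕ} {K : Subgroup G} (hK : SubNilK k K) :
    ∃ H, K ≤ H ∧ MaxNilK k H := by
  obtain ⟨H, hKH, hmax⟩ := zorn_le_nonempty₀ {H : Subgroup G | SubNilK k H}
    (fun c hc hchain L hL => ⟨sSup c,
      subNilK_sSup_of_directedOn ⟨L, hL⟩ hchain.directedOn fun H hH => hc hH,
      fun _ => le_sSup⟩) K hK
  exact ⟨H, hKH, hmax.1, fun K hK hHK => le_antisymm (hmax.2 hK hHK) hHK⟩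

lemma Malnormal.le_of_isNilpotent {H K : Subgroup G} (hH : Malnormal H)
    (hK : Group.IsNilpotent K) (hHK : H ⊓ K ≠ ⊥) : K ≤ H := by
  by_contra hKH
  obtain ⟨⟨z, hzH, hzK⟩, hz⟩ := Subgroup.ne_bot_iff_exists_ne_one.mp hHK
  let D : Subgroup K := (H ⊓ K).subgroupOf K
  have hD : D < ⊤ := by
    refine lt_top_iff_ne_top.mpr fun hD => hKH fun b hb => ?_
    have hbD : (⟨b, hb⟩ : K) ∈ D := hD ▸ Subgroup.mem_top _
    exact (Subgroup.mem_subgroupOf.mp hbD).1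
  obtain ⟨m, hmN, hmD⟩ := SetLike.exists_of_lt (Group.normalizerCondition_of_isNilpotent D hD)
  have hmH : (m : G) ∉ H := fun hmH => hmD (Subgroup.mem_subgroupOf.mpr ⟨hmH, m.2⟩)
  have hconj : m * ⟨z, hzK⟩ * m⁻¹ ∈ D :=
    (Subgroup.mem_normalizer_iff.mp hmN _).mp (Subgroup.mem_subgroupOf.mpr ⟨hzH, hzK⟩)
  exact hz (Subtype.ext (hH m hmH z hzH (Subgroup.mem_subgroupOf.mp hconj).1))

theorem stmt0_general (k : ℕ) {G : Type*} [Group G]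
    (hmal : ∀ H : Subgroup G, MaxNilK k H → Malnormal H)
    (K₁ K₂ : Subgroup G) (h₁ : SubNilK k K₁) (h₂ : SubNilK k K₂)
    (hint : K₁ ⊓ K₂ ≠ ⊥) :
    SubNilK k (K₁ ⊔ K₂) := by
  obtain ⟨H, hK₁H, hH⟩ := exists_maxNilK_ge h₁
  have hK₂H : K₂ ≤ H :=
    (hmal H hH).le_of_isNilpotent (Subgroup.isNilpotent_of_lowerCentralSeries_eq_bot h₂)
      (ne_bot_of_le_ne_bot hint (inf_le_inf_right K₂ hK₁H))
  exact hH.1.mono (sup_le hK₁H hK₂H)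

theorem stmt0 (k : ℕ) (hk : 0 < k) {G : Type*} [Group G]
    (hmal : ∀ H : Subgroup G, MaxNilK k H → Malnormal H)
    (K₁ K₂ : Subgroup G) (h₁ : SubNilK k K₁) (h₂ : SubNilK k K₂)
    (hint : K₁ ⊓ K₂ ≠ ⊥) :
    SubNilK k (K₁ ⊔ K₂) :=
  stmt0_general k hmal K₁ K₂ h₁ h₂ hint
end

section
/- G is CSN_k if and only if G is NT_k and for all non-identity x, y, z ∈ G, if ⟨x, y⟩ and ⟨x, z⁻¹yz⟩ are nilpotent of class at most k then ⟨x, z⟩ is nilpotent of class at most k. -/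
variable {G : Type*} [Group G]

namespace Stmt19Aux

open Subgroup
open scoped commutatorElement

/-- Transfer `γ_k = ⊥` along an injective homomorphism. -/
lemma lcs_eq_bot_of_injective {H₁ H₂ : Type*} [Group H₁] [Group H₂] (f : H₁ →* H₂)
    (hf : Function.Injective f) (k : ℕ) (h : (⊤ : Subgroup H₂).lowerCentralSeries k = ⊥) :
    (⊤ : Subgroup H₁).lowerCentralSeries k = ⊥ := by
  have hmap := lowerCentralSeries.map f k
  rw [h] at hmap
  refine Subgroup.map_injective hf ?_
  rw [Subgroup.map_bot]
  exact le_bot_iff.mp hmap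

lemma map_lcs_mono {G : Type*} [Group G] {A B : Subgroup G} (h : A ≤ B) (n : ℕ) :
    ((⊤ : Subgroup A).lowerCentralSeries n).map A.subtype ≤ ((⊤ : Subgroup B).lowerCentralSeries n).map B.subtype := by
  have h1 := lowerCentralSeries.map (Subgroup.inclusion h) n
  have h2 := Subgroup.map_mono (f := B.subtype) h1
  rwa [Subgroup.map_map, Subgroup.subtype_comp_inclusion] at h2

lemma subNilK_mono {k : ℕ} {A B : Subgroup G} (h : A ≤ B) (hB : SubNilK k B) :
    SubNilK k A := by
  unfold SubNilK at *
  exact le_bot_iff.mp (hB ▸ Subgroup.lowerCentralSeries_mono k h)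

lemma subNilK_iff_top {k : ℕ} {H : Subgroup G} :
    SubNilK k H ↔ (⊤ : Subgroup H).lowerCentralSeries k = ⊥ := by
  show H.lowerCentralSeries k = ⊥ ↔ _
  rw [← Subgroup.top_subtype_lowerCentralSeries H k]
  exact ⟨fun h => Subgroup.map_injective H.subtype_injective (by rw [h, Subgroup.map_bot]),
    fun h => by rw [h, Subgroup.map_bot]⟩

/-- The lower central series is "local": it is contained in the (directed) supremum
of the images of the lower central series of finitely generated subgroups. -/
lemma lcs_le_iSup_finset {G : Type*} [Group G] (n : ℕ) :
    (⊤ : Subgroup G).lowerCentralSeries n ≤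
      ⨆ S : Finset G,
        ((⊤ : Subgroup ↥(closure (S : Set G))).lowerCentralSeries n).map (closure (S : Set G)).subtype := by
  induction n with
  | zero =>
    intro g _
    have hg : g ∈ closure ((({g} : Finset G) : Set G)) := by
      apply Subgroup.subset_closure; simp
    have hmem : g ∈ ((⊤ : Subgroup ↥(closure ((({g} : Finset G) : Set G)))).lowerCentralSeries 0).map
        (closure ((({g} : Finset G) : Set G))).subtype := by
      rw [Subgroup.lowerCentralSeries_zero]
      exact Subgroup.mem_map.mpr ⟨⟨g, hg⟩, mem_top _, rfl⟩
    exact le_iSup (fun S : Finset G =>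
      ((⊤ : Subgroup ↥(closure (S : Set G))).lowerCentralSeries 0).map (closure (S : Set G)).subtype)
      ({g} : Finset G) hmem
  | succ n ih =>
    classical
    have hdir : Directed (· ≤ ·) (fun S : Finset G =>
        ((⊤ : Subgroup ↥(closure (S : Set G))).lowerCentralSeries n).map (closure (S : Set G)).subtype) := by
      intro S T
      refine ⟨S ∪ T, map_lcs_mono (Subgroup.closure_mono ?_) n, map_lcs_mono (Subgroup.closure_mono ?_) n⟩
      · intro x hx; simp only [Finset.coe_union, Set.mem_union]; exact Or.inl hx
      · intro x hx; simp only [Finset.coe_union, Set.mem_union]; exact Or.inr hx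
    show ⁅(⊤ : Subgroup G).lowerCentralSeries n, (⊤ : Subgroup G)⁆ ≤ _
    rw [Subgroup.commutator_le]
    intro p hp q _
    have hp' := ih hp
    rw [Subgroup.mem_iSup_of_directed hdir] at hp'
    obtain ⟨S, hpS⟩ := hp'
    set T : Finset G := insert q S with hT
    have hST : closure ((S : Set G)) ≤ closure ((T : Set G)) := by
      apply Subgroup.closure_mono; intro x hx
      simp only [hT, Finset.coe_insert, Set.mem_insert_iff]; exact Or.inr hx
    have hpT : p ∈ ((⊤ : Subgroup ↥(closure (T : Set G))).lowerCentralSeries n).map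
        (closure (T : Set G)).subtype := map_lcs_mono hST n hpS
    obtain ⟨p', hp', rfl⟩ := Subgroup.mem_map.mp hpT
    have hqT : q ∈ closure ((T : Set G)) := by
      apply Subgroup.subset_closure; simp [hT]
    have hcomm : ⁅p', (⟨q, hqT⟩ : ↥(closure (T : Set G)))⁆ ∈
        (⊤ : Subgroup ↥(closure (T : Set G))).lowerCentralSeries (n + 1) :=
      Subgroup.commutator_mem_commutator hp' (mem_top _)
    have : ⁅(closure (T : Set G)).subtype p', q⁆ ∈
        ((⊤ : Subgroup ↥(closure (T : Set G))).lowerCentralSeries (n + 1)).map (closure (T : Set G)).subtype := by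
      refine Subgroup.mem_map.mpr ⟨⁅p', (⟨q, hqT⟩ : ↥(closure (T : Set G)))⁆, hcomm, ?_⟩
      simp [commutatorElement_def]
    exact le_iSup (fun S : Finset G =>
      ((⊤ : Subgroup ↥(closure (S : Set G))).lowerCentralSeries (n + 1)).map (closure (S : Set G)).subtype)
      T this

/-- Locality: if every finitely generated subgroup has trivial `γ_k`, so does `G`. -/
lemma lcs_eq_bot_of_finsets {G : Type*} [Group G] (k : ℕ)
    (h : ∀ S : Finset G, (⊤ : Subgroup ↥(closure (S : Set G))).lowerCentralSeries k = ⊥) :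
    (⊤ : Subgroup G).lowerCentralSeries k = ⊥ := by
  refine le_bot_iff.mp ((lcs_le_iSup_finset k).trans ?_)
  simp [h]

/-- The union of a nonempty chain of nil_k subgroups is nil_k. -/
lemma subNilK_sSup_chain {k : ℕ} (c : Set (Subgroup G)) (hc : IsChain (· ≤ ·) c)
    (hne : c.Nonempty) (hmem : ∀ K ∈ c, SubNilK k K) : SubNilK k (sSup c) := by
  classical
  set T : Subgroup G := sSup c with hTdef
  rw [subNilK_iff_top]
  apply lcs_eq_bot_of_finsets
  intro S
  have hdir : DirectedOn (· ≤ ·) c := hc.directedOn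
  -- find a member of the chain containing all (coercions of) elements of S
  have hexists : ∃ K ∈ c, ∀ x ∈ S, (x : G) ∈ K := by
    induction S using Finset.induction_on with
    | empty =>
      obtain ⟨K, hK⟩ := hne
      exact ⟨K, hK, by simp⟩
    | @insert x S' _ ih =>
      obtain ⟨K, hKc, hK⟩ := ih
      have hx : (x : G) ∈ sSup c := x.2
      rw [Subgroup.mem_sSup_of_directedOn hne hdir] at hx
      obtain ⟨K', hK'c, hxK'⟩ := hx
      obtain ⟨L, hLc, hKL, hK'L⟩ := hdir K hKc K' hK'c
      refine ⟨L, hLc, ?_⟩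
      intro y hy
      rcases Finset.mem_insert.mp hy with rfl | hy
      · exact hK'L hxK'
      · exact hKL (hK y hy)
  obtain ⟨K, hKc, hK⟩ := hexists
  set P : Subgroup ↥T := closure ((S : Set ↥T)) with hP
  have hmapP : Subgroup.map T.subtype P ≤ K := by
    rw [hP, MonoidHom.map_closure, closure_le]
    rintro x ⟨y, hy, rfl⟩
    exact hK y hy
  have hKnil : SubNilK k K := hmem K hKc
  have hnil : SubNilK k (Subgroup.map T.subtype P) := subNilK_mono hmapP hKnil
  -- transfer back to P via the equivalence
  have e := Subgroup.equivMapOfInjective P T.subtype (Subgroup.subtype_injective T)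
  exact lcs_eq_bot_of_injective e.toMonoidHom e.injective k (subNilK_iff_top.mp hnil)

/-- Every nil_k subgroup is contained in a maximal one (Zorn). -/
lemma exists_maxNilK {k : ℕ} (K : Subgroup G) (hK : SubNilK k K) :
    ∃ M : Subgroup G, K ≤ M ∧ MaxNilK k M := by
  obtain ⟨M, hKM, hMmax⟩ := zorn_le_nonempty₀ {H : Subgroup G | SubNilK k H}
    (fun c hcs hchain y hy =>
      ⟨sSup c, subNilK_sSup_chain c hchain ⟨y, hy⟩ (fun L hL => hcs hL),
        fun z hz => le_sSup hz⟩) K hK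
  exact ⟨M, hKM, hMmax.1, fun L hL hML => le_antisymm (hMmax.2 hL hML) hML⟩

/-- If `M₁` is a malnormal maximal nil_k subgroup and `M₂` is nil_k with
nontrivial intersection with `M₁`, then `M₂ ≤ M₁`. -/
lemma le_of_inter_ne_bot {k : ℕ} {M₁ M₂ : Subgroup G} (h2 : SubNilK k M₂)
    (hmal : Malnormal M₁) (hint : M₁ ⊓ M₂ ≠ ⊥) : M₂ ≤ M₁ := by
  haveI : Group.IsNilpotent ↥M₂ := Subgroup.nilpotent_iff_lowerCentralSeries.mpr ⟨k, subNilK_iff_top.mp h2⟩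
  set N : Subgroup ↥M₂ := Subgroup.comap M₂.subtype M₁ with hN
  obtain ⟨x, hx, hx1⟩ : ∃ x ∈ M₁ ⊓ M₂, x ≠ 1 := by
    by_contra hcon
    push_neg at hcon
    exact hint (le_bot_iff.mp fun z hz => Subgroup.mem_bot.mpr (hcon z hz))
  have hNbot : N ≠ ⊥ := by
    intro hb
    have hmem : (⟨x, hx.2⟩ : ↥M₂) ∈ N := by
      simp only [hN, Subgroup.mem_comap]; exact hx.1
    rw [hb, Subgroup.mem_bot] at hmem
    exact hx1 (congrArg Subtype.val hmem)
  have hNtop : N = ⊤ := by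
    by_contra hNe
    have hlt : N < normalizer (N : Set ↥M₂) :=
      normalizerCondition_of_isNilpotent N (lt_top_iff_ne_top.mpr hNe)
    obtain ⟨g, hgnorm, hgN⟩ := SetLike.exists_of_lt hlt
    have hgM₁ : (g : G) ∉ M₁ := by
      intro h; exact hgN (by simp only [hN, Subgroup.mem_comap]; exact h)
    have : N ≤ ⊥ := by
      intro y hy
      have hyconj : g * y * g⁻¹ ∈ N := (Subgroup.mem_normalizer_iff.mp hgnorm y).mp hy
      have h1 : (y : G) ∈ M₁ := by
        have := hy; simpa only [hN, Subgroup.mem_comap, Subgroup.coe_subtype] using this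
      have h2' : (g : G) * (y : G) * (g : G)⁻¹ ∈ M₁ := by
        have := hyconj
        simpa only [hN, Subgroup.mem_comap, Subgroup.coe_mul, Subgroup.coe_inv,
          Subgroup.coe_subtype] using this
      have := hmal (g : G) hgM₁ (y : G) h1 h2'
      exact Subgroup.mem_bot.mpr (Subtype.ext this)
    exact hNbot (le_bot_iff.mp this)
  intro z hz
  have : (⟨z, hz⟩ : ↥M₂) ∈ N := by rw [hNtop]; exact mem_top _
  simpa only [hN, Subgroup.mem_comap, Subgroup.coe_subtype] using this

lemma ne_bot_of_mem {K : Subgroup G} {x : G} (hx : x ∈ K) (hx1 : x ≠ 1) : K ≠ ⊥ := by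
  intro h
  rw [h, Subgroup.mem_bot] at hx
  exact hx1 hx

end Stmt19Aux

open Subgroup Stmt19Aux in
theorem stmt19 (k : ℕ) {G : Type*} [Group G] :
    IsCSNk k G ↔
      IsNTk k G ∧
        ∀ x y z : G, x ≠ 1 → y ≠ 1 → z ≠ 1 →
          SubNilK k (Subgroup.closure {x, y}) →
          SubNilK k (Subgroup.closure {x, z⁻¹ * y * z}) →
          SubNilK k (Subgroup.closure {x, z}) := by
  constructor
  · intro hCSN
    constructor
    · -- NT_k
      intro K₁ K₂ h1 h2 hint
      obtain ⟨M₁, hK₁, hM₁⟩ := exists_maxNilK K₁ h1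
      obtain ⟨M₂, hK₂, hM₂⟩ := exists_maxNilK K₂ h2
      have hint' : M₁ ⊓ M₂ ≠ ⊥ := fun h =>
        hint (le_bot_iff.mp (((inf_le_inf hK₁ hK₂).trans h.le)))
      have h21 : M₂ ≤ M₁ := le_of_inter_ne_bot hM₂.1 (hCSN M₁ hM₁) hint'
      exact subNilK_mono (sup_le hK₁ (hK₂.trans h21)) hM₁.1
    · -- the conjugation condition
      intro x y z hx hy _hz hxy hxyz
      obtain ⟨M, hle, hM⟩ := exists_maxNilK _ hxy
      obtain ⟨M', hle', hM'⟩ := exists_maxNilK _ hxyz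
      have hxM : x ∈ M := hle (subset_closure (by simp))
      have hxM' : x ∈ M' := hle' (subset_closure (by simp))
      have hMM : M' ≤ M :=
        le_of_inter_ne_bot hM'.1 (hCSN M hM)
          (ne_bot_of_mem (Subgroup.mem_inf.mpr ⟨hxM, hxM'⟩) hx)
      have hyM : y ∈ M := hle (subset_closure (by simp))
      have hconjM : z⁻¹ * y * z ∈ M := hMM (hle' (subset_closure (by simp)))
      have hzM : z ∈ M := by
        by_contra hzM
        have hz' : z⁻¹ ∉ M := fun h => hzM (by simpa using inv_mem h)
        exact hy (hCSN M hM z⁻¹ hz' y hyM (by rwa [inv_inv]))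
      refine subNilK_mono ?_ hM.1
      rw [closure_le]
      rintro w hw
      rcases hw with rfl | hw
      · exact hxM
      · rw [Set.mem_singleton_iff] at hw; subst hw; exact hzM
  · rintro ⟨hNT, hcond⟩ H hH g hgH y hyH hconj
    -- goal : y = 1
    rcases Nat.eq_zero_or_pos k with rfl | hk
    · -- k = 0 : H is trivial
      have h0 : (⊤ : Subgroup ↥H) = ⊥ := subNilK_iff_top.mp hH.1
      have hmem : (⟨y, hyH⟩ : ↥H) ∈ (⊥ : Subgroup ↥H) := h0 ▸ Subgroup.mem_top _
      exact congrArg Subtype.val (Subgroup.mem_bot.mp hmem)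
    · by_contra hy
      have hg1 : g ≠ 1 := fun h => hgH (h ▸ H.one_mem)
      set a : G := g * y * g⁻¹ with ha
      have key : g⁻¹ * a * g = y := by rw [ha]; group
      have ha1 : a ≠ 1 := by
        intro h
        apply hy
        rw [← key, h, mul_one, inv_mul_cancel]
      -- hypothesis 1 : ⟨a, a⟩ is cyclic hence nil_k
      have hcyc : SubNilK k (closure ({a, a} : Set G)) := by
        rw [subNilK_iff_top]
        rw [Set.pair_eq_singleton, ← zpowers_eq_closure]
        have h1 : (⊤ : Subgroup ↥(zpowers a)).lowerCentralSeries 1 = ⊥ := by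
          rw [Subgroup.top_lowerCentralSeries_one]
          refine le_bot_iff.mp (Subgroup.commutator_le.mpr ?_)
          intro g₁ _ g₂ _
          rw [Subgroup.mem_bot, commutatorElement_eq_one_iff_commute]
          exact Std.Commutative.comm g₁ g₂
        exact le_bot_iff.mp (h1 ▸ (⊤ : Subgroup ↥(zpowers a)).lowerCentralSeries_antitone hk)
      -- hypothesis 2 : ⟨a, g⁻¹ a g⟩ = ⟨a, y⟩ ≤ H is nil_k
      have hpair : SubNilK k (closure ({a, g⁻¹ * a * g} : Set G)) := by
        rw [key]
        refine subNilK_mono ?_ hH.1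
        rw [closure_le]
        rintro w hw
        rcases hw with rfl | hw
        · exact hconj
        · rw [Set.mem_singleton_iff] at hw; subst hw; exact hyH
      have h3 : SubNilK k (closure ({a, g} : Set G)) :=
        hcond a a g ha1 ha1 hg1 hcyc hpair
      set N : Subgroup G := closure ({a, g} : Set G) with hNdef
      have haN : a ∈ N := subset_closure (by simp)
      have hgN : g ∈ N := subset_closure (by simp)
      have hyN : y ∈ N := by
        rw [← key]
        exact mul_mem (mul_mem (inv_mem hgN) haN) hgN
      have hint : H ⊓ N ≠ ⊥ :=
        ne_bot_of_mem (Subgroup.mem_inf.mpr ⟨hyH, hyN⟩) hy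
      have hsup : SubNilK k (H ⊔ N) := hNT H N hH.1 h3 hint
      have hHN : H ⊔ N = H := hH.2 (H ⊔ N) hsup le_sup_left
      exact hgH (hHN ▸ (le_sup_right : N ≤ H ⊔ N) hgN)
end
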